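/- Let m be odd and n be even. There is no walk of even length in the infinite knight's graph on Z² from (0,0) to (m,0) or to (-m,0). Consequently, there is no cylindrical knight's tour on the m×n Klein bottle board. -/

import Mathlib

/-- The knight's move graph on `ℤ × ℤ`. -/
def knightGraph : SimpleGraph (ℤ × ℤ) where
  Adj p q := (|p.1 - q.1| = 1 ∧ |p.2 - q.2| = 2) ∨ (|p.1 - q.1| = 2 ∧ |p.2 - q.2| = 1)
  symm := by
    constructor
    intro p q h
    rcases h with ⟨h1, h2⟩ | ⟨h1, h2⟩
    · exact Or.inl ⟨by rw [abs_sub_comm]; exact h1, by rw [abs_sub_comm]; exact h2⟩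
    · exact Or.inr ⟨by rw [abs_sub_comm]; exact h1, by rw [abs_sub_comm]; exact h2⟩
  loopless := by
    constructor
    intro p h
    rcases h with ⟨h1, _⟩ | ⟨h1, _⟩ <;> simp at h1

/-- The covering map from the plane (or the width-`m` strip) to the `m × n`
Möbius strip / Klein bottle board: `(a,b) ↦ ((-1)^(b div n) · a mod m, b mod n)`. -/
def phi (m n : ℕ) (p : ℤ × ℤ) : ℤ × ℤ :=
  ((if Even (p.2 / (n : ℤ)) then p.1 else -p.1) % (m : ℤ), p.2 % (n : ℤ))

/-- The `m × n` board, as a set of integer points. -/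
def boardSet (m n : ℕ) : Set (ℤ × ℤ) :=
  {p | 0 ≤ p.1 ∧ p.1 < (m : ℤ) ∧ 0 ≤ p.2 ∧ p.2 < (n : ℤ)}

lemma knight_adj_odd {u v : ℤ × ℤ} (h : knightGraph.Adj u v) :
    Odd (v.1 + v.2 - (u.1 + u.2)) := by
  rw [Int.odd_iff]
  rcases h with ⟨h1, h2⟩ | ⟨h1, h2⟩
  · rcases (abs_eq (by norm_num : (0:ℤ) ≤ 1)).mp h1 with h1 | h1 <;>
      rcases (abs_eq (by norm_num : (0:ℤ) ≤ 2)).mp h2 with h2 | h2 <;> omega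
  · rcases (abs_eq (by norm_num : (0:ℤ) ≤ 2)).mp h1 with h1 | h1 <;>
      rcases (abs_eq (by norm_num : (0:ℤ) ≤ 1)).mp h2 with h2 | h2 <;> omega

lemma knight_walk_parity {u v : ℤ × ℤ} (w : knightGraph.Walk u v) :
    Even (v.1 + v.2 - (u.1 + u.2) - (w.length : ℤ)) := by
  induction w with
  | nil => simp
  | cons h p ih =>
    obtain ⟨k, hk⟩ := knight_adj_odd h
    obtain ⟨j, hj⟩ := ih
    refine ⟨j + k, ?_⟩
    simp only [SimpleGraph.Walk.length_cons] at *
    push_cast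
    omega

/-- For `m` odd and `n` even: there is no even-length walk in the infinite knight's graph
on `ℤ²` from `(0,0)` to `(±m, 0)`; consequently, there is no cylindrical knight's tour on
the `m × n` Klein bottle board (a closed tour whose lift to `ℤ²` starting at `(0,0)` ends
at `(±m, 0)`). -/
theorem no_cylindrical_tour_of_odd_even (m n : ℕ) (hm : Odd m) (hn : Even n)
    (hm0 : 0 < m) (hn0 : 0 < n) :
    (¬ ∃ (e : ℤ × ℤ) (w : knightGraph.Walk ((0 : ℤ), (0 : ℤ)) e),
        (e = ((m : ℤ), 0) ∨ e = (-(m : ℤ), 0)) ∧ Even w.length) ∧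
    (¬ ∃ (e : ℤ × ℤ) (w : knightGraph.Walk ((0 : ℤ), (0 : ℤ)) e),
        (e = ((m : ℤ), 0) ∨ e = (-(m : ℤ), 0)) ∧ w.length = m * n ∧
        ∀ q ∈ boardSet m n, ∃! i : Fin (m * n), phi m n (w.getVert i) = q) := by
  obtain ⟨a, ha⟩ := hm
  have key : ¬ ∃ (e : ℤ × ℤ) (w : knightGraph.Walk ((0 : ℤ), (0 : ℤ)) e),
      (e = ((m : ℤ), 0) ∨ e = (-(m : ℤ), 0)) ∧ Even w.length := by
    rintro ⟨e, w, he, ⟨l, hl⟩⟩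
    obtain ⟨j, hj⟩ := knight_walk_parity w
    rcases he with rfl | rfl <;> simp only at hj <;>
      · rw [hl] at hj; push_cast at hj; omega
  refine ⟨key, ?_⟩
  rintro ⟨e, w, he, hlen, -⟩
  obtain ⟨b, hb⟩ := hn
  exact key ⟨e, w, he, ⟨m * b, by rw [hlen, hb, Nat.mul_add]⟩⟩
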